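/- arXiv:1206.2079 — 6 statements merged into one kernel-verified Lean document; each statement's English description precedes it below -/
import Mathlib

section
/- If θ : ℝ → ℝ is subadditive (θ(x+y) ≤ θ(x) + θ(y) for all x, y) and limsup_{h→0} |θ(h)/h| = L < ∞, then θ is Lipschitz continuous with Lipschitz constant L. -/
/-!
Subadditivity gives `θ h ≤ n • θ (h / n)`, and for `n` large `h / n` lies in the neighbourhood of
`0` where `θ` grows at most like `(L + δ) ‖·‖`; since this bound scales linearly it transfers back to
`h`. Letting `δ → 0` gives `θ h ≤ L ‖h‖` for all `h ≠ 0`, and subadditivity once more, in the form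
`θ x - θ y ≤ θ (x - y)`, turns this one-sided bound into the Lipschitz estimate.
-/

theorem apply_succ_nsmul_le_succ_nsmul {M N : Type*} [AddMonoid M] [AddCommMonoid N]
    [PartialOrder N] [IsOrderedAddMonoid N] {θ : M → N} (hsub : ∀ x y, θ (x + y) ≤ θ x + θ y)
    (a : M) (n : ℕ) : θ ((n + 1) • a) ≤ (n + 1) • θ a := by
  induction n with
  | zero => simp
  | succ n ih =>
    calc θ ((n + 1 + 1) • a) = θ ((n + 1) • a + a) := by rw [succ_nsmul]
      _ ≤ θ ((n + 1) • a) + θ a := hsub _ _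
      _ ≤ (n + 1) • θ a + θ a := add_le_add_left ih _
      _ = (n + 1 + 1) • θ a := (succ_nsmul _ _).symm

theorem le_mul_norm_of_le_mul_norm_near_zero {E : Type*} [NormedAddCommGroup E] [NormedSpace ℝ E]
    {θ : E → ℝ} {M ε : ℝ} (hsub : ∀ x y, θ (x + y) ≤ θ x + θ y) (hε : 0 < ε)
    (hloc : ∀ h, h ≠ 0 → ‖h‖ < ε → θ h ≤ M * ‖h‖) {h : E} (hh : h ≠ 0) :
    θ h ≤ M * ‖h‖ := by
  obtain ⟨n, hn⟩ := exists_nat_gt (‖h‖ / ε)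
  set k : ℝ := n + 1
  have hk : 0 < k := by positivity
  set a := k⁻¹ • h
  have ha : a ≠ 0 := smul_ne_zero (inv_ne_zero hk.ne') hh
  have hnorm : ‖a‖ = ‖h‖ / k := by
    rw [norm_smul, Real.norm_eq_abs, abs_inv, abs_of_pos hk, inv_mul_eq_div]
  have hsmall : ‖a‖ < ε := by
    rw [hnorm, div_lt_iff₀ hk, mul_comm, ← div_lt_iff₀ hε]
    exact hn.trans (lt_add_one _)
  have hdecomp : (n + 1) • a = h := by
    rw [← Nat.cast_smul_eq_nsmul ℝ, smul_smul, Nat.cast_succ, mul_inv_cancel₀ hk.ne', one_smul]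
  calc θ h = θ ((n + 1) • a) := by rw [hdecomp]
    _ ≤ k * θ a := by simpa [nsmul_eq_mul, k] using apply_succ_nsmul_le_succ_nsmul hsub a n
    _ ≤ k * (M * ‖a‖) := mul_le_mul_of_nonneg_left (hloc a ha hsmall) hk.le
    _ = M * ‖h‖ := by rw [hnorm]; field_simp

theorem abs_sub_le_mul_norm_of_subadditive {E : Type*} [SeminormedAddGroup E] {θ : E → ℝ}
    {K : ℝ} (hsub : ∀ x y, θ (x + y) ≤ θ x + θ y) (hbound : ∀ h, h ≠ 0 → θ h ≤ K * ‖h‖)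
    (x y : E) : |θ x - θ y| ≤ K * ‖x - y‖ := by
  rcases eq_or_ne x y with rfl | hxy
  · simp
  have hxy' : θ x - θ y ≤ K * ‖x - y‖ := by
    have := hsub (x - y) y
    rw [sub_add_cancel] at this
    linarith [hbound (x - y) (sub_ne_zero.2 hxy)]
  have hyx' : θ y - θ x ≤ K * ‖x - y‖ := by
    have := hsub (y - x) x
    rw [sub_add_cancel] at this
    rw [norm_sub_rev]
    linarith [hbound (y - x) (sub_ne_zero.2 hxy.symm)]
  exact abs_sub_le_iff.2 ⟨hxy', hyx'⟩

/-- If θ : ℝ → ℝ is subadditive and limsup_{h→0} |θ(h)/h| = L < ∞ (in the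
ε-δ form: for every δ > 0 there is ε > 0 with |θ(h)|/|h| < L + δ for
0 < |h| < ε), then θ is Lipschitz continuous with Lipschitz constant L. -/
theorem subadditive_limsup_lipschitz (θ : ℝ → ℝ) (L : ℝ)
    (hsub : ∀ x y : ℝ, θ (x + y) ≤ θ x + θ y)
    (hL : ∀ δ > (0:ℝ), ∃ ε > (0:ℝ), ∀ h : ℝ, 0 < |h| → |h| < ε → |θ h| / |h| < L + δ) :
    ∀ x y : ℝ, |θ x - θ y| ≤ L * |x - y| := by
  have hbound_add : ∀ δ > 0, ∀ h : ℝ, h ≠ 0 → θ h ≤ (L + δ) * |h| := by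
    intro δ hδ h hh
    obtain ⟨ε, hε, hloc⟩ := hL δ hδ
    refine le_mul_norm_of_le_mul_norm_near_zero hsub hε (fun h' hh' hsmall => ?_) hh
    have hpos : 0 < |h'| := abs_pos.2 hh'
    exact (le_abs_self _).trans ((div_lt_iff₀ hpos).1 (hloc h' hpos hsmall)).le
  have hbound : ∀ h : ℝ, h ≠ 0 → θ h ≤ L * |h| := fun h hh =>
    le_of_forall_pos_le_add fun e he => by
      simpa [add_mul, div_mul_cancel₀ e (abs_ne_zero.2 hh)] using
        hbound_add (e / |h|) (div_pos he (abs_pos.2 hh)) h hh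
  exact abs_sub_le_mul_norm_of_subadditive hsub hbound
end

section
/- Let θ : ℝ → ℝ be bounded on every bounded interval. Let u₁ < u₂ and v₁ < v₂, and set U = [u₁,u₂], V = [v₁,v₂]. If θ(u) + θ(v) = θ(u+v) for every u ∈ U and v ∈ V, then there exists c ∈ ℝ such that θ(u) = θ(u₁) + c(u−u₁) for all u ∈ U, θ(v) = θ(v₁) + c(v−v₁) for all v ∈ V, and θ(w) = θ(u₁+v₁) + c(w−u₁−v₁) for all w ∈ [u₁+v₁, u₂+v₂]. -/
/-!
Normalising at `u₁ + v₁`, the function `k z = θ (u₁ + v₁ + z) - θ (u₁ + v₁)` satisfies Cauchy's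
equation `k (x + y) = k x + k y` for `x ∈ [0, a]`, `y ∈ [0, b]` (`a = u₂ - u₁`, `b = v₂ - v₁`),
and it also describes `θ` on `U` and `V`. Subtract from `k` the line through `0` and `(m, k m)`,
`m = min a b`, to get `ψ` with `ψ m = 0`. Additivity gives `ψ (m / q) = 0`, hence `ψ` vanishes at
the grid points `p m / q`, so `ψ t = ψ s` with `s ∈ [0, m / q]`, and `q ψ s = ψ (q s)` is bounded;
thus `ψ = 0` on `[0, m]`. Writing `x = n (x / n)` spreads this to `[0, a]` and `[0, b]`, and then
to `[0, a + b]`.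
-/

open Set

def AdditiveOnIcc (φ : ℝ → ℝ) (a b : ℝ) : Prop :=
  ∀ x ∈ Icc 0 a, ∀ y ∈ Icc 0 b, φ (x + y) = φ x + φ y

namespace AdditiveOnIcc

variable {φ : ℝ → ℝ} {a b : ℝ}

theorem symm (h : AdditiveOnIcc φ a b) : AdditiveOnIcc φ b a := fun x hx y hy => by
  rw [add_comm, h y hy x hx, add_comm]

theorem mono (h : AdditiveOnIcc φ a b) {a' b' : ℝ} (ha : a' ≤ a) (hb : b' ≤ b) :
    AdditiveOnIcc φ a' b' := fun x hx y hy =>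
  h x (Icc_subset_Icc_right ha hx) y (Icc_subset_Icc_right hb hy)

theorem sub_mul (h : AdditiveOnIcc φ a b) (c : ℝ) :
    AdditiveOnIcc (fun x => φ x - c * x) a b := fun x hx y hy => by
  simp only [h x hx y hy]
  ring

theorem map_zero (h : AdditiveOnIcc φ a b) (ha : 0 ≤ a) (hb : 0 ≤ b) : φ 0 = 0 := by
  have := h 0 ⟨le_rfl, ha⟩ 0 ⟨le_rfl, hb⟩
  rw [add_zero] at this
  linarith

theorem map_nat_mul (h : AdditiveOnIcc φ a b) {s : ℝ} (hs : s ∈ Icc 0 b) :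
    ∀ n : ℕ, n * s ≤ a → φ (n * s) = n * φ s
  | 0, ha => by simpa using h.map_zero (by simpa using ha) (hs.1.trans hs.2)
  | n + 1, hna => by
    have hn : n * s ≤ a := by push_cast at hna; linarith [hs.1]
    have hns : n * s ∈ Icc 0 a := ⟨by positivity [hs.1], hn⟩
    push_cast
    rw [add_one_mul, h _ hns s hs, h.map_nat_mul hs n hn, add_one_mul]

theorem eq_zero_of_bounded {m M : ℝ} (h : AdditiveOnIcc φ m m) (hm : 0 < m) (hφm : φ m = 0)
    (hM : ∀ x ∈ Icc 0 m, |φ x| ≤ M) : ∀ t ∈ Icc 0 m, φ t = 0 := by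
  intro t ht
  have hmul_le : ∀ q : ℕ, (q + 1 : ℝ) * |φ t| ≤ M := by
    intro q
    set δ := m / (q + 1)
    have hδ0 : 0 < δ := by positivity
    have hδm : δ ≤ m := div_le_self hm.le (by linarith [q.cast_nonneg (α := ℝ)])
    have hqδ : ((q + 1 : ℕ) : ℝ) * δ = m := by push_cast; exact mul_div_cancel₀ m (by positivity)
    have hφδ : φ δ = 0 := by
      have := h.map_nat_mul ⟨hδ0.le, hδm⟩ (q + 1) hqδ.le
      rw [hqδ, hφm] at this
      exact (mul_eq_zero.mp this.symm).resolve_left (by positivity)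
    -- `t = p δ + s` with `p δ` a grid point and `0 ≤ s < δ`
    set p := ⌊t / δ⌋₊
    have hpt : p * δ ≤ t := (le_div_iff₀ hδ0).mp (Nat.floor_le (by positivity [ht.1]))
    have htp : t < (p + 1) * δ := (div_lt_iff₀ hδ0).mp (Nat.lt_floor_add_one _)
    set s := t - p * δ
    have hs : s ∈ Icc 0 m := ⟨by linarith, by linarith⟩
    have hφt : φ t = φ s := by
      have := h (p * δ) ⟨by positivity, hpt.trans ht.2⟩ s hs
      rwa [add_sub_cancel, h.map_nat_mul ⟨hδ0.le, hδm⟩ p (hpt.trans ht.2), hφδ, mul_zero,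
        zero_add] at this
    have hqs : ((q + 1 : ℕ) : ℝ) * s ≤ m := by
      rw [← hqδ]; gcongr; linarith
    have := hM _ ⟨by positivity [hs.1], hqs⟩
    rwa [h.map_nat_mul hs _ hqs, abs_mul, Nat.abs_cast, ← hφt, Nat.cast_succ] at this
  by_contra hne
  obtain ⟨q, hq⟩ := exists_nat_gt (M / |φ t|)
  have := hmul_le q
  rw [div_lt_iff₀ (abs_pos.mpr hne)] at hq
  nlinarith [abs_nonneg (φ t)]

theorem eq_zero_of_eq_zero_near_zero {m : ℝ} (h : AdditiveOnIcc φ a b) (hm : 0 < m)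
    (hmb : m ≤ b) (h₀ : ∀ x ∈ Icc 0 m, φ x = 0) : ∀ x ∈ Icc 0 a, φ x = 0 := by
  intro x hx
  obtain ⟨n, hn⟩ := exists_nat_gt (x / m)
  have hn0 : (0 : ℝ) < n := lt_of_le_of_lt (by positivity [hx.1]) hn
  have hxn : n * (x / n) = x := mul_div_cancel₀ x hn0.ne'
  have hsm : x / n ≤ m := by
    rw [div_le_iff₀ hn0]; rw [div_lt_iff₀ hm] at hn; linarith
  have hs : x / n ∈ Icc 0 m := ⟨by positivity [hx.1], hsm⟩
  rw [← hxn, h.map_nat_mul ⟨hs.1, hsm.trans hmb⟩ n (hxn.symm ▸ hx.2), h₀ _ hs, mul_zero]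

theorem exists_eq_mul {M : ℝ} (h : AdditiveOnIcc φ a b) (ha : 0 < a) (hb : 0 < b)
    (hM : ∀ x ∈ Icc 0 (min a b), |φ x| ≤ M) : ∃ c, ∀ z ∈ Icc 0 (a + b), φ z = c * z := by
  set m := min a b
  have hm : 0 < m := lt_min ha hb
  set c := φ m / m
  set ψ := fun x => φ x - c * x
  have hψ : AdditiveOnIcc ψ a b := h.sub_mul c
  have hψm : ψ m = 0 := by simp only [ψ, c]; field_simp; ring
  have hψM : ∀ x ∈ Icc 0 m, |ψ x| ≤ M + |c| * m := fun x hx =>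
    calc |ψ x| ≤ |φ x| + |c| * |x| := (abs_sub _ _).trans_eq (by rw [abs_mul])
      _ ≤ M + |c| * m := by
        gcongr
        · exact hM x hx
        · exact abs_le.mpr ⟨by linarith [hx.1], hx.2⟩
  have hψ₀ := (hψ.mono (min_le_left a b) (min_le_right a b)).eq_zero_of_bounded hm hψm hψM
  have hψa := hψ.eq_zero_of_eq_zero_near_zero hm (min_le_right a b) hψ₀
  have hψb := hψ.symm.eq_zero_of_eq_zero_near_zero hm (min_le_left a b) hψ₀
  refine ⟨c, fun z hz => sub_eq_zero.mp ?_⟩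
  rcases le_or_gt z a with hza | hza
  · exact hψa z ⟨hz.1, hza⟩
  · have hzb : z - a ∈ Icc 0 b := ⟨by linarith, by linarith [hz.2]⟩
    have := hψ a ⟨ha.le, le_rfl⟩ (z - a) hzb
    rwa [add_sub_cancel, hψa a ⟨ha.le, le_rfl⟩, hψb _ hzb, add_zero] at this

end AdditiveOnIcc

theorem additiveOnIcc_of_add_eq {θ : ℝ → ℝ} {u₁ u₂ v₁ v₂ : ℝ}
    (hadd : ∀ u ∈ Icc u₁ u₂, ∀ v ∈ Icc v₁ v₂, θ u + θ v = θ (u + v)) :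
    AdditiveOnIcc (fun z => θ (u₁ + v₁ + z) - θ (u₁ + v₁)) (u₂ - u₁) (v₂ - v₁) := by
  have hshift : ∀ x ∈ Icc 0 (u₂ - u₁), ∀ y ∈ Icc 0 (v₂ - v₁),
      θ (u₁ + x) + θ (v₁ + y) = θ (u₁ + v₁ + (x + y)) := fun x hx y hy => by
    rw [hadd _ ⟨by linarith [hx.1], by linarith [hx.2]⟩ _ ⟨by linarith [hy.1], by linarith [hy.2]⟩]
    ring_nf
  intro x hx y hy
  have h₀ : (0 : ℝ) ∈ Icc 0 (u₂ - u₁) := ⟨le_rfl, hx.1.trans hx.2⟩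
  have h₀' : (0 : ℝ) ∈ Icc 0 (v₂ - v₁) := ⟨le_rfl, hy.1.trans hy.2⟩
  have hxy := hshift x hx y hy
  have hx0 := hshift x hx 0 h₀'
  have h0y := hshift 0 h₀ y hy
  have h00 := hshift 0 h₀ 0 h₀'
  simp only [add_zero, zero_add] at hxy hx0 h0y h00 ⊢
  linarith

/-- Interval Lemma (Gomory–Johnson): if θ is bounded on every bounded interval
and θ(u)+θ(v)=θ(u+v) for all u ∈ [u₁,u₂], v ∈ [v₁,v₂], then θ is affine with a
common slope c on [u₁,u₂], [v₁,v₂] and [u₁+v₁,u₂+v₂]. -/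
theorem interval_lemma (θ : ℝ → ℝ) (u₁ u₂ v₁ v₂ : ℝ) (hu : u₁ < u₂) (hv : v₁ < v₂)
    (hbdd : ∀ a b : ℝ, ∃ M : ℝ, ∀ x ∈ Set.Icc a b, |θ x| ≤ M)
    (hadd : ∀ u ∈ Set.Icc u₁ u₂, ∀ v ∈ Set.Icc v₁ v₂, θ u + θ v = θ (u + v)) :
    ∃ c : ℝ,
      (∀ u ∈ Set.Icc u₁ u₂, θ u = θ u₁ + c * (u - u₁)) ∧
      (∀ v ∈ Set.Icc v₁ v₂, θ v = θ v₁ + c * (v - v₁)) ∧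
      (∀ w ∈ Set.Icc (u₁ + v₁) (u₂ + v₂), θ w = θ (u₁ + v₁) + c * (w - u₁ - v₁)) := by
  obtain ⟨M, hM⟩ := hbdd (u₁ + v₁) (u₂ + v₂)
  have hkM : ∀ z ∈ Icc 0 (min (u₂ - u₁) (v₂ - v₁)),
      |θ (u₁ + v₁ + z) - θ (u₁ + v₁)| ≤ M + M := fun z hz => by
    have hz' : z ≤ u₂ - u₁ := hz.2.trans (min_le_left _ _)
    exact (abs_sub _ _).trans (add_le_add (hM _ ⟨by linarith [hz.1], by linarith⟩)
      (hM _ ⟨le_rfl, by linarith⟩))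
  obtain ⟨c, hc⟩ := (additiveOnIcc_of_add_eq hadd).exists_eq_mul (sub_pos.2 hu) (sub_pos.2 hv) hkM
  have hw : ∀ w ∈ Icc (u₁ + v₁) (u₂ + v₂), θ w = θ (u₁ + v₁) + c * (w - u₁ - v₁) := by
    intro w hw
    have := hc (w - (u₁ + v₁)) ⟨by linarith [hw.1], by linarith [hw.2]⟩
    rw [add_sub_cancel] at this
    linarith
  have h₀ := hadd u₁ ⟨le_rfl, hu.le⟩ v₁ ⟨le_rfl, hv.le⟩
  refine ⟨c, fun u hu' => ?_, fun v hv' => ?_, hw⟩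
  · have := hw (u + v₁) ⟨by linarith [hu'.1], by linarith [hu'.2]⟩
    linarith [hadd u hu' v₁ ⟨le_rfl, hv.le⟩]
  · have := hw (u₁ + v) ⟨by linarith [hv'.1], by linarith [hv'.2]⟩
    linarith [hadd u₁ ⟨le_rfl, hu.le⟩ v hv']
end

section
/- Let π be a minimal valid function for R_f(G,S) and suppose π = (1/2)(π¹ + π²) where π¹, π² are valid functions. Then π¹ and π² are minimal, and for all x, y ∈ G, if π(x) + π(y) = π(x+y) then π¹(x) + π¹(y) = π¹(x+y) and π²(x) + π²(y) = π²(x+y). -/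
/-- π : G → ℝ is a valid function for the group problem R_f(G,S):
π is nonnegative and ∑ π(r) s(r) ≥ 1 for every feasible s. -/
def GJValid {G : Type*} [AddCommGroup G] (S : AddSubgroup G) (f : G) (π : G → ℝ) : Prop :=
  (∀ r : G, 0 ≤ π r) ∧
  ∀ s : G →₀ ℤ, (∀ r : G, 0 ≤ s r) →
    (∃ g ∈ S, (s.sum fun r n => n • r) = f + g) →
    1 ≤ s.sum fun r n => (n : ℝ) * π r

/-- π is minimal: valid, and no valid function π' ≤ π other than π itself. -/
def GJMinimal {G : Type*} [AddCommGroup G] (S : AddSubgroup G) (f : G) (π : G → ℝ) : Prop :=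
  GJValid S f π ∧ ∀ π' : G → ℝ, GJValid S f π' → (∀ r, π' r ≤ π r) → π' = π

/-!
If `π' ≤ π₁` is valid, then `(π' + π₂) / 2 ≤ π` is valid, so it equals `π` by minimality and
`π' = π₁`. A minimal function is subadditive: otherwise lowering it at `x + y` to `π x + π y`
keeps it valid, since any solution using `x + y` can be rewritten to use `x` and `y` instead.
Finally, two subadditive functions whose average is additive at `(x, y)` are both additive there.
-/

open Finsupp

lemma linearCombination_update_of_apply_eq_zero {G M : Type*} [AddCommGroup M] [DecidableEq G]
    (v : G → M) {z : G} (w : M) {s : G →₀ ℤ} (hs : s z = 0) :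
    linearCombination ℤ (Function.update v z w) s = linearCombination ℤ v s := by
  simp only [linearCombination_apply]
  refine sum_congr fun r hr => ?_
  rw [Function.update_of_ne (by rintro rfl; exact mem_support_iff.1 hr hs)]

section
variable {G : Type*} [AddCommGroup G] {S : AddSubgroup G} {f : G}

lemma gjValid_iff_linearCombination {π : G → ℝ} :
    GJValid S f π ↔ (∀ r, 0 ≤ π r) ∧ ∀ s : G →₀ ℤ, (∀ r, 0 ≤ s r) →
      (∃ g ∈ S, linearCombination ℤ id s = f + g) → 1 ≤ linearCombination ℤ π s := by
  simp only [GJValid, linearCombination_apply, id, zsmul_eq_mul]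

lemma GJValid.midpoint {π₁ π₂ : G → ℝ} (h₁ : GJValid S f π₁) (h₂ : GJValid S f π₂) :
    GJValid S f (fun r => (π₁ r + π₂ r) / 2) := by
  rw [gjValid_iff_linearCombination] at *
  refine ⟨fun r => by linarith [h₁.1 r, h₂.1 r], fun s hs hfeas => ?_⟩
  have hcost : linearCombination ℤ (fun r => (π₁ r + π₂ r) / 2) s
      = (linearCombination ℤ π₁ s + linearCombination ℤ π₂ s) / 2 := by
    simp only [linearCombination_apply, Finsupp.sum, ← Finset.sum_add_distrib, Finset.sum_div]
    exact Finset.sum_congr rfl fun r _ => by simp only [zsmul_eq_mul]; ring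
  linarith [h₁.2 s hs hfeas, h₂.2 s hs hfeas]

lemma GJValid.update_add [DecidableEq G] {π : G → ℝ} (h : GJValid S f π) (x y : G) :
    GJValid S f (Function.update π (x + y) (π x + π y)) := by
  rw [gjValid_iff_linearCombination] at *
  refine ⟨fun r => ?_, fun s hs ⟨g, hg, hfeas⟩ => ?_⟩
  · rcases eq_or_ne r (x + y) with rfl | hr
    · simpa using add_nonneg (h.1 x) (h.1 y)
    · simpa [hr] using h.1 r
  set c := s (x + y)
  set t := s.erase (x + y)
  have ht : t (x + y) = 0 := erase_same
  have hst : s = t + single (x + y) c := (erase_add_single _ _).symm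
  let s' := t + single x c + single y c
  have hs' : ∀ r, 0 ≤ s' r := fun r => by
    have hc := hs (x + y)
    have htr : 0 ≤ t r := by rw [erase_apply]; split_ifs <;> [exact le_rfl; exact hs r]
    simp only [s', coe_add, Pi.add_apply, single_apply]
    split_ifs <;> omega
  have hfeas' : linearCombination ℤ id s' = f + g := by
    rw [← hfeas, hst]
    simp only [s', map_add, linearCombination_single, id, smul_add, add_assoc]
  calc 1 ≤ linearCombination ℤ π s' := h.2 s' hs' ⟨g, hg, hfeas'⟩
    _ = linearCombination ℤ (Function.update π (x + y) (π x + π y)) s := by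
      rw [hst]
      simp only [s', map_add, linearCombination_single,
        linearCombination_update_of_apply_eq_zero _ _ ht, Function.update_self, smul_add, add_assoc]

lemma GJMinimal.subadditive {π : G → ℝ} (h : GJMinimal S f π) (x y : G) :
    π (x + y) ≤ π x + π y := by
  classical
  by_contra! hlt
  have hle : ∀ r, Function.update π (x + y) (π x + π y) r ≤ π r := fun r => by
    rcases eq_or_ne r (x + y) with rfl | hr
    · simpa using hlt.le
    · simp [hr]
  have heq := congrFun (h.2 _ (h.1.update_add x y) hle) (x + y)
  simp only [Function.update_self] at heq
  linarith

lemma GJMinimal.of_midpoint {π π₁ π₂ : G → ℝ} (hπ : GJMinimal S f π)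
    (hmid : ∀ r, π r = (π₁ r + π₂ r) / 2) (h₁ : GJValid S f π₁) (h₂ : GJValid S f π₂) :
    GJMinimal S f π₁ := by
  refine ⟨h₁, fun π' hπ' hle => funext fun r => ?_⟩
  have heq := hπ.2 _ (hπ'.midpoint h₂) fun r => by linarith [hmid r, hle r]
  linarith [congrFun heq r, hmid r]

end

/-- If π is minimal and π = ½(π¹+π²) with π¹, π² valid, then π¹ and π² are
minimal, and every additivity relation tight for π is tight for π¹ and π². -/
theorem tightness_lemma {G : Type*} [AddCommGroup G] (S : AddSubgroup G) (f : G)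
    (π π₁ π₂ : G → ℝ) (hπ : GJMinimal S f π)
    (h12 : ∀ x, π x = (π₁ x + π₂ x) / 2)
    (h1 : GJValid S f π₁) (h2 : GJValid S f π₂) :
    GJMinimal S f π₁ ∧ GJMinimal S f π₂ ∧
      ∀ x y : G, π x + π y = π (x + y) →
        (π₁ x + π₁ y = π₁ (x + y) ∧ π₂ x + π₂ y = π₂ (x + y)) := by
  have hmin₁ := hπ.of_midpoint h12 h1 h2
  have hmin₂ := hπ.of_midpoint (fun r => (h12 r).trans (by ring)) h2 h1
  refine ⟨hmin₁, hmin₂, fun x y hxy => ?_⟩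
  have hsub₁ := hmin₁.subadditive x y
  have hsub₂ := hmin₂.subadditive x y
  constructor <;> linarith [h12 x, h12 y, h12 (x + y)]
end

section
/- Let π : ℝ → ℝ be a nonnegative minimal valid function (subadditive, π(0)=0, periodic mod ℤ, symmetric about f) and π = (1/2)(π¹ + π²) with π¹, π² valid. If limsup_{h→0} |π(h)/h| < ∞, then the same holds for π¹ and π², and consequently π, π¹, π² are all Lipschitz continuous. -/
/-- Validity for the one-dimensional infinite group problem R_f(ℝ,ℤ). -/
def GJValidR (f : ℝ) (π : ℝ → ℝ) : Prop :=
  (∀ r : ℝ, 0 ≤ π r) ∧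
  ∀ s : ℝ →₀ ℤ, (∀ r : ℝ, 0 ≤ s r) →
    (∃ g ∈ AddSubgroup.zmultiples (1 : ℝ), (s.sum fun r n => n • r) = f + g) →
    1 ≤ s.sum fun r n => (n : ℝ) * π r

/-!
Since `π = (π₁ + π₂) / 2` and validity gives `πᵢ x + πᵢ (f - x) ≥ 1`, the symmetry
`π x + π (f - x) = 1` forces the same equality for each `πᵢ`; valid symmetric functions are
subadditive, and `0 ≤ πᵢ ≤ 2π` transfers the bound on the slope at `0`. A subadditive function
vanishing at `0` with bounded slope near `0` satisfies `θ h ≤ L |h|` everywhere (write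
`h = n · (h / n)`), and then `θ x - θ y ≤ θ (x - y)` makes it Lipschitz.
-/

theorem Finsupp.sum_multiset_sum_map_single {α M : Type*} [AddCommMonoid M] (m : Multiset α)
    (g : α → ℤ → M) (hg0 : ∀ r, g r 0 = 0) (hgadd : ∀ r a b, g r (a + b) = g r a + g r b) :
    (m.map fun x => Finsupp.single x (1 : ℤ)).sum.sum g = (m.map fun x => g x 1).sum := by
  induction m using Multiset.induction with
  | empty => simp
  | cons a m ih => simp [Finsupp.sum_add_index' hg0 hgadd, ih, Finsupp.sum_single_index (hg0 a)]

theorem GJValidR.one_le_sum_map {f : ℝ} {π : ℝ → ℝ} (hπ : GJValidR f π) (m : Multiset ℝ)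
    (hm : m.sum = f) : 1 ≤ (m.map π).sum := by
  set s : ℝ →₀ ℤ := (m.map fun x => Finsupp.single x 1).sum
  have hs_nonneg (r : ℝ) : 0 ≤ s r := by
    rw [← Finsupp.applyAddHom_apply, map_multiset_sum, Multiset.map_map]
    refine Multiset.sum_nonneg fun n hn => ?_
    obtain ⟨x, -, rfl⟩ := Multiset.mem_map.mp hn
    exact Finsupp.single_nonneg.mpr zero_le_one r
  have hs_sum : (s.sum fun r n => n • r) = f + 0 := by
    rw [Finsupp.sum_multiset_sum_map_single m _ (fun r => zero_smul ℤ r)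
      (fun r a b => add_smul a b r)]
    simp [hm]
  have key := hπ.2 s hs_nonneg ⟨0, zero_mem _, hs_sum⟩
  rw [Finsupp.sum_multiset_sum_map_single m (fun r n => (n : ℝ) * π r) (fun r => by simp)
    (fun r a b => by push_cast; ring)] at key
  simpa using key

theorem GJValidR.subadditive {f : ℝ} {π : ℝ → ℝ} (hπ : GJValidR f π)
    (hsym : ∀ x, π x + π (f - x) = 1) (x y : ℝ) : π (x + y) ≤ π x + π y := by
  have h3 := hπ.one_le_sum_map {x, y, f - (x + y)} (by
    simp only [Multiset.insert_eq_cons, Multiset.sum_cons, Multiset.sum_singleton]; ring)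
  simp only [Multiset.insert_eq_cons, Multiset.map_cons, Multiset.sum_cons, Multiset.map_singleton,
    Multiset.sum_singleton] at h3
  linarith [hsym (x + y)]

theorem GJValidR.symmetric_of_average {f : ℝ} {π π₁ π₂ : ℝ → ℝ} (h₁ : GJValidR f π₁)
    (h₂ : GJValidR f π₂) (hπ : ∀ x, π x = (π₁ x + π₂ x) / 2)
    (hsym : ∀ x, π x + π (f - x) = 1) (x : ℝ) : π₁ x + π₁ (f - x) = 1 := by
  have hpair (p : ℝ → ℝ) (hp : GJValidR f p) : 1 ≤ p x + p (f - x) := by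
    simpa using hp.one_le_sum_map {x, f - x} (by simp)
  linarith [hpair π₁ h₁, hpair π₂ h₂, hsym x, hπ x, hπ (f - x)]

section Subadditive

variable {θ : ℝ → ℝ}

theorem le_nat_mul_of_subadditive (h0 : θ 0 = 0) (hsub : ∀ x y, θ (x + y) ≤ θ x + θ y)
    (n : ℕ) (x : ℝ) : θ (n * x) ≤ n * θ x := by
  induction n with
  | zero => simp [h0]
  | succ n ih =>
    calc θ ((n + 1 : ℕ) * x) = θ (n * x + x) := by push_cast; ring_nf
      _ ≤ θ (n * x) + θ x := hsub _ _
      _ ≤ (n + 1 : ℕ) * θ x := by push_cast; linarith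

theorem le_mul_abs_of_subadditive (h0 : θ 0 = 0) (hsub : ∀ x y, θ (x + y) ≤ θ x + θ y)
    {L ε : ℝ} (hε : 0 < ε) (hloc : ∀ h, |h| < ε → θ h ≤ L * |h|) (h : ℝ) :
    θ h ≤ L * |h| := by
  obtain ⟨n, hn⟩ := exists_nat_gt (|h| / ε)
  have hn_pos : (0 : ℝ) < n := (div_nonneg (abs_nonneg h) hε.le).trans_lt hn
  have hsmall : |h / n| < ε := by
    rw [abs_div, Nat.abs_cast, div_lt_iff₀ hn_pos]
    rwa [div_lt_iff₀ hε, mul_comm] at hn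
  calc θ h = θ (n * (h / n)) := by rw [mul_div_cancel₀ h hn_pos.ne']
    _ ≤ n * θ (h / n) := le_nat_mul_of_subadditive h0 hsub n _
    _ ≤ n * (L * |h / n|) := by gcongr; exact hloc _ hsmall
    _ = L * |h| := by rw [abs_div, Nat.abs_cast]; field_simp

theorem abs_sub_le_of_subadditive (hsub : ∀ x y, θ (x + y) ≤ θ x + θ y) {L : ℝ}
    (hlin : ∀ h, θ h ≤ L * |h|) (x y : ℝ) : |θ x - θ y| ≤ L * |x - y| := by
  have hxy := hsub y (x - y)
  have hyx := hsub x (y - x)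
  rw [add_sub_cancel] at hxy hyx
  rw [abs_sub_le_iff]
  constructor
  · linarith [hlin (x - y)]
  · linarith [abs_sub_comm y x ▸ hlin (y - x)]

end Subadditive

/-- `limsup_{h → 0} |θ h / h| < ∞` -/
def HasBoundedSlopeAtZero (θ : ℝ → ℝ) : Prop :=
  ∃ L : ℝ, ∀ δ > (0:ℝ), ∃ ε > (0:ℝ), ∀ h : ℝ, 0 < |h| → |h| < ε → |θ h| / |h| < L + δ

namespace HasBoundedSlopeAtZero

variable {θ θ' : ℝ → ℝ}

theorem of_abs_le (hθ : HasBoundedSlopeAtZero θ) {c : ℝ} (hc : 0 ≤ c)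
    (hθ' : ∀ x, |θ' x| ≤ c * |θ x|) : HasBoundedSlopeAtZero θ' := by
  obtain ⟨L, hL⟩ := hθ
  refine ⟨c * L, fun δ hδ => ?_⟩
  obtain ⟨ε, hε, hb⟩ := hL (δ / (c + 1)) (by positivity)
  refine ⟨ε, hε, fun h hpos hlt => ?_⟩
  have hcδ : c * (δ / (c + 1)) < δ := by
    rw [mul_div_assoc', div_lt_iff₀ (by positivity)]; linarith
  calc |θ' h| / |h| ≤ c * (|θ h| / |h|) := by
        rw [mul_div_assoc']; gcongr; exact hθ' h
    _ ≤ c * (L + δ / (c + 1)) := by gcongr; exact (hb h hpos hlt).le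
    _ < c * L + δ := by linarith

theorem exists_le_mul_abs (hθ : HasBoundedSlopeAtZero θ) (h0 : θ 0 = 0) :
    ∃ L, ∃ ε > (0 : ℝ), ∀ h, |h| < ε → θ h ≤ L * |h| := by
  obtain ⟨L, hL⟩ := hθ
  obtain ⟨ε, hε, hb⟩ := hL 1 one_pos
  refine ⟨L + 1, ε, hε, fun h hlt => ?_⟩
  rcases eq_or_ne h 0 with rfl | hne
  · simp [h0]
  · have hpos : 0 < |h| := abs_pos.mpr hne
    have := hb h hpos hlt
    rw [div_lt_iff₀ hpos] at this
    linarith [le_abs_self (θ h)]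

theorem exists_lipschitz (hθ : HasBoundedSlopeAtZero θ) (h0 : θ 0 = 0)
    (hsub : ∀ x y, θ (x + y) ≤ θ x + θ y) : ∃ K, ∀ x y, |θ x - θ y| ≤ K * |x - y| := by
  obtain ⟨L, ε, hε, hloc⟩ := hθ.exists_le_mul_abs h0
  exact ⟨L, abs_sub_le_of_subadditive hsub (le_mul_abs_of_subadditive h0 hsub hε hloc)⟩

end HasBoundedSlopeAtZero

theorem continuity_theorem_general (f : ℝ) (π π₁ π₂ : ℝ → ℝ)
    (h0 : π 0 = 0)
    (hsub : ∀ x y : ℝ, π (x + y) ≤ π x + π y)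
    (hsym : ∀ x : ℝ, π x + π (f - x) = 1)
    (h12 : ∀ x, π x = (π₁ x + π₂ x) / 2)
    (h1 : GJValidR f π₁) (h2 : GJValidR f π₂)
    (hL : ∃ L : ℝ, ∀ δ > (0:ℝ), ∃ ε > (0:ℝ), ∀ h : ℝ, 0 < |h| → |h| < ε → |π h| / |h| < L + δ) :
    (∃ L : ℝ, ∀ δ > (0:ℝ), ∃ ε > (0:ℝ), ∀ h : ℝ, 0 < |h| → |h| < ε → |π₁ h| / |h| < L + δ) ∧
    (∃ L : ℝ, ∀ δ > (0:ℝ), ∃ ε > (0:ℝ), ∀ h : ℝ, 0 < |h| → |h| < ε → |π₂ h| / |h| < L + δ) ∧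
    (∃ K : ℝ, ∀ x y : ℝ, |π x - π y| ≤ K * |x - y|) ∧
    (∃ K : ℝ, ∀ x y : ℝ, |π₁ x - π₁ y| ≤ K * |x - y|) ∧
    (∃ K : ℝ, ∀ x y : ℝ, |π₂ x - π₂ y| ≤ K * |x - y|) := by
  have hL : HasBoundedSlopeAtZero π := hL
  have h21 : ∀ x, π x = (π₂ x + π₁ x) / 2 := fun x => by rw [h12, add_comm]
  have hle₁ (x : ℝ) : |π₁ x| ≤ 2 * |π x| := by
    rw [abs_of_nonneg (h1.1 x)]; linarith [h12 x, h2.1 x, le_abs_self (π x)]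
  have hle₂ (x : ℝ) : |π₂ x| ≤ 2 * |π x| := by
    rw [abs_of_nonneg (h2.1 x)]; linarith [h12 x, h1.1 x, le_abs_self (π x)]
  have h0₁ : π₁ 0 = 0 := abs_nonpos_iff.mp (by simpa [h0] using hle₁ 0)
  have h0₂ : π₂ 0 = 0 := abs_nonpos_iff.mp (by simpa [h0] using hle₂ 0)
  have hL₁ := hL.of_abs_le zero_le_two hle₁
  have hL₂ := hL.of_abs_le zero_le_two hle₂
  exact ⟨hL₁, hL₂, hL.exists_lipschitz h0 hsub,
    hL₁.exists_lipschitz h0₁ (h1.subadditive (h1.symmetric_of_average h2 h12 hsym)),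
    hL₂.exists_lipschitz h0₂ (h2.subadditive (h2.symmetric_of_average h1 h21 hsym))⟩

/-- If π is a minimal valid function, π = ½(π¹+π²) with π¹, π² valid, and
limsup_{h→0} |π(h)/h| < ∞, then the same limsup condition holds for π¹ and π²,
and π, π¹, π² are all Lipschitz continuous. -/
theorem continuity_theorem (f : ℝ) (π π₁ π₂ : ℝ → ℝ)
    (hnn : ∀ x, 0 ≤ π x) (h0 : π 0 = 0)
    (hsub : ∀ x y : ℝ, π (x + y) ≤ π x + π y)
    (hper : ∀ x : ℝ, π (x + 1) = π x)
    (hsym : ∀ x : ℝ, π x + π (f - x) = 1)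
    (h12 : ∀ x, π x = (π₁ x + π₂ x) / 2)
    (h1 : GJValidR f π₁) (h2 : GJValidR f π₂)
    (hL : ∃ L : ℝ, ∀ δ > (0:ℝ), ∃ ε > (0:ℝ), ∀ h : ℝ, 0 < |h| → |h| < ε → |π h| / |h| < L + δ) :
    (∃ L : ℝ, ∀ δ > (0:ℝ), ∃ ε > (0:ℝ), ∀ h : ℝ, 0 < |h| → |h| < ε → |π₁ h| / |h| < L + δ) ∧
    (∃ L : ℝ, ∀ δ > (0:ℝ), ∃ ε > (0:ℝ), ∀ h : ℝ, 0 < |h| → |h| < ε → |π₂ h| / |h| < L + δ) ∧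
    (∃ K : ℝ, ∀ x y : ℝ, |π x - π y| ≤ K * |x - y|) ∧
    (∃ K : ℝ, ∀ x y : ℝ, |π₁ x - π₁ y| ≤ K * |x - y|) ∧
    (∃ K : ℝ, ∀ x y : ℝ, |π₂ x - π₂ y| ≤ K * |x - y|) :=
  continuity_theorem_general f π π₁ π₂ h0 hsub hsym h12 h1 h2 hL
end

section
/- Let Γ be generated by reflections ρ_{r₁},...,ρ_{rₙ} (n ≥ 1) and translations τ_{t₁},...,τ_{tₘ} of ℝ, and suppose the additive group Λ = ⟨r₂−r₁,...,rₙ−r₁, t₁,...,tₘ⟩_ℤ is discrete with generator t > 0. Then V⁺ = [½(r₁−t), ½r₁] is a fundamental domain of Γ: every Γ-orbit meets V⁺ in exactly one point. -/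
/-!
Since `ρ_a ρ_b = τ_{a-b}` and `ρ_c τ_s = τ_{-s} ρ_c`, the group `Γ` consists exactly of the maps
`τ_s` and `τ_s ρ_{r₁}` with `s ∈ Λ = tℤ`. Reducing `x` modulo `t` into `(½(r₁-t), ½(r₁+t)]` and
reflecting the upper half through `½r₁` lands in `V⁺`. Conversely, if `y` and `g y` both lie in
`V⁺`, then either `g y - y ∈ tℤ` has absolute value `< t` and so vanishes, or `y + g y - r₁ ∈ tℤ`
lies in `[-t, 0]`, which forces `y = g y` to be an endpoint of `V⁺`.
-/

/-- The point reflection x ↦ r − x, as a permutation of ℝ. -/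
def rho (r : ℝ) : Equiv.Perm ℝ :=
  ⟨fun x => r - x, fun x => r - x,
    fun x => show r - (r - x) = x by ring,
    fun x => show r - (r - x) = x by ring⟩

/-- The translation x ↦ x + t, as a permutation of ℝ. -/
def tau (t : ℝ) : Equiv.Perm ℝ := Equiv.addRight t

@[simp] lemma rho_apply (r x : ℝ) : rho r x = r - x := rfl
@[simp] lemma tau_apply (t x : ℝ) : tau t x = x + t := rfl

lemma tau_zero : tau 0 = 1 := Equiv.ext fun x => add_zero x

lemma tau_add (a b : ℝ) : tau (a + b) = tau a * tau b :=
  Equiv.ext fun x => by simp only [Equiv.Perm.mul_apply, tau_apply]; ring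

lemma tau_neg (a : ℝ) : tau (-a) = (tau a)⁻¹ := by
  rw [eq_inv_iff_mul_eq_one, ← tau_add, neg_add_cancel, tau_zero]

lemma tau_sub_mul_rho (a b : ℝ) : tau (a - b) * rho b = rho a :=
  Equiv.ext fun x => by simp only [Equiv.Perm.mul_apply, rho_apply, tau_apply]; ring

lemma rho_mul_rho (a b : ℝ) : rho a * rho b = tau (a - b) :=
  Equiv.ext fun x => by simp only [Equiv.Perm.mul_apply, rho_apply, tau_apply]; ring

def reflTransGroup (c : ℝ) (Λ : AddSubgroup ℝ) : Subgroup (Equiv.Perm ℝ) where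
  carrier := {g | ∃ s ∈ Λ, g = tau s ∨ g = tau s * rho c}
  one_mem' := ⟨0, zero_mem Λ, Or.inl tau_zero.symm⟩
  mul_mem' := by
    rintro _ _ ⟨a, ha, rfl | rfl⟩ ⟨b, hb, rfl | rfl⟩
    · exact ⟨a + b, add_mem ha hb, Or.inl <| Equiv.ext fun x => by
        simp only [Equiv.Perm.mul_apply, tau_apply]; ring⟩
    · exact ⟨a + b, add_mem ha hb, Or.inr <| Equiv.ext fun x => by
        simp only [Equiv.Perm.mul_apply, rho_apply, tau_apply]; ring⟩
    · exact ⟨a - b, sub_mem ha hb, Or.inr <| Equiv.ext fun x => by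
        simp only [Equiv.Perm.mul_apply, rho_apply, tau_apply]; ring⟩
    · exact ⟨a - b, sub_mem ha hb, Or.inl <| Equiv.ext fun x => by
        simp only [Equiv.Perm.mul_apply, rho_apply, tau_apply]; ring⟩
  inv_mem' := by
    rintro _ ⟨a, ha, rfl | rfl⟩
    · exact ⟨-a, neg_mem ha, Or.inl (tau_neg a).symm⟩
    · refine ⟨a, ha, Or.inr ?_⟩
      rw [inv_eq_iff_mul_eq_one]
      exact Equiv.ext fun x => by
        simp only [Equiv.Perm.mul_apply, Equiv.Perm.one_apply, rho_apply, tau_apply]; ring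

section Closure

variable {ι κ : Type*} (c : ι → ℝ) (tv : κ → ℝ)

lemma tau_mem_closure_of_mem_closure (i₀ : ι) {s : ℝ}
    (hs : s ∈ AddSubgroup.closure (Set.range (fun i => c i - c i₀) ∪ Set.range tv)) :
    tau s ∈ Subgroup.closure
      ((Set.range fun i => rho (c i)) ∪ Set.range fun j => tau (tv j)) := by
  induction hs using AddSubgroup.closure_induction with
  | mem s hs =>
    rcases hs with ⟨i, rfl⟩ | ⟨j, rfl⟩
    · rw [← rho_mul_rho]
      exact mul_mem (Subgroup.subset_closure (Or.inl ⟨i, rfl⟩))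
        (Subgroup.subset_closure (Or.inl ⟨i₀, rfl⟩))
    · exact Subgroup.subset_closure (Or.inr ⟨j, rfl⟩)
  | zero => exact tau_zero ▸ one_mem _
  | add a b _ _ ha hb => exact tau_add a b ▸ mul_mem ha hb
  | neg a _ ha => exact tau_neg a ▸ inv_mem ha

lemma closure_rho_tau_eq_reflTransGroup (i₀ : ι) :
    Subgroup.closure ((Set.range fun i => rho (c i)) ∪ Set.range fun j => tau (tv j)) =
      reflTransGroup (c i₀)
        (AddSubgroup.closure (Set.range (fun i => c i - c i₀) ∪ Set.range tv)) := by
  apply le_antisymm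
  · rw [Subgroup.closure_le]
    rintro _ (⟨i, rfl⟩ | ⟨j, rfl⟩)
    · exact ⟨c i - c i₀, AddSubgroup.subset_closure (Or.inl ⟨i, rfl⟩),
        Or.inr (tau_sub_mul_rho _ _).symm⟩
    · exact ⟨tv j, AddSubgroup.subset_closure (Or.inr ⟨j, rfl⟩), Or.inl rfl⟩
  · rintro _ ⟨s, hs, rfl | rfl⟩
    · exact tau_mem_closure_of_mem_closure c tv i₀ hs
    · exact mul_mem (tau_mem_closure_of_mem_closure c tv i₀ hs)
        (Subgroup.subset_closure (Or.inl ⟨i₀, rfl⟩))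

end Closure

section FundamentalDomain

variable {c t : ℝ}

lemma exists_mem_reflTransGroup_apply_mem_Icc (ht : 0 < t) (x : ℝ) :
    ∃ g ∈ reflTransGroup c (AddSubgroup.zmultiples t), g x ∈ Set.Icc ((c - t) / 2) (c / 2) := by
  have hs : toIocMod ht ((c - t) / 2) x - x ∈ AddSubgroup.zmultiples t := by
    rw [← self_sub_toIocDiv_zsmul, sub_sub_cancel_left]
    exact neg_mem (AddSubgroup.zsmul_mem_zmultiples _ _)
  obtain ⟨hlo, hhi⟩ := toIocMod_mem_Ioc ht ((c - t) / 2) x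
  set x' := toIocMod ht ((c - t) / 2) x
  by_cases hx' : x' ≤ c / 2
  · exact ⟨tau (x' - x), ⟨_, hs, Or.inl rfl⟩, by
      simp only [Set.mem_Icc, tau_apply]; constructor <;> linarith⟩
  · refine ⟨rho c * tau (x' - x), mul_mem ?_ ⟨_, hs, Or.inl rfl⟩, by
      simp only [Set.mem_Icc, Equiv.Perm.mul_apply, rho_apply, tau_apply]; constructor <;> linarith⟩
    exact ⟨0, zero_mem _, Or.inr (by rw [tau_zero, one_mul])⟩

lemma apply_eq_self_of_mem_reflTransGroup (ht : 0 < t) {g : Equiv.Perm ℝ}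
    (hg : g ∈ reflTransGroup c (AddSubgroup.zmultiples t)) {y : ℝ}
    (hy : y ∈ Set.Icc ((c - t) / 2) (c / 2)) (hgy : g y ∈ Set.Icc ((c - t) / 2) (c / 2)) :
    g y = y := by
  obtain ⟨_, ⟨k, rfl⟩, rfl | rfl⟩ := hg <;>
    simp only [Set.mem_Icc, Equiv.Perm.mul_apply, rho_apply, tau_apply, zsmul_eq_mul] at hy hgy ⊢
  · have hlt : k < 1 := by
      exact_mod_cast lt_of_mul_lt_mul_right (by linarith : k * t < 1 * t) ht.le
    have hgt : -1 < k := by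
      exact_mod_cast lt_of_mul_lt_mul_right (by linarith : -1 * t < k * t) ht.le
    obtain rfl : k = 0 := by omega
    simp
  · have hle : k ≤ 0 := by
      exact_mod_cast le_of_mul_le_mul_right (by linarith : k * t ≤ 0 * t) ht
    have hge : -1 ≤ k := by
      exact_mod_cast le_of_mul_le_mul_right (by linarith : -1 * t ≤ k * t) ht
    obtain rfl | rfl : k = 0 ∨ k = -1 := by omega
    all_goals push_cast at hgy ⊢; linarith

end FundamentalDomain

/-- If the additive group Λ = ⟨r₂−r₁,…,rₙ−r₁,t₁,…,tₘ⟩_ℤ is discrete with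
generator t > 0, then V⁺ = [½(r₁−t), ½r₁] is a fundamental domain of
Γ = ⟨ρ_{r₁},…,ρ_{rₙ}, τ_{t₁},…,τ_{tₘ}⟩: every Γ-orbit meets V⁺ in exactly one
point. -/
theorem fundamental_domain (n m : ℕ) (hn : 0 < n)
    (r : Fin n → ℝ) (tv : Fin m → ℝ)
    (Γ : Subgroup (Equiv.Perm ℝ))
    (hΓ : Γ = Subgroup.closure
      ((Set.range fun i => rho (r i)) ∪ (Set.range fun j => tau (tv j))))
    (Λ : AddSubgroup ℝ)
    (hΛ : Λ = AddSubgroup.closure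
      ((Set.range fun i => r i - r ⟨0, hn⟩) ∪ Set.range tv))
    (t : ℝ) (ht : 0 < t) (hgen : Λ = AddSubgroup.zmultiples t) :
    ∀ x : ℝ, ∃! y : ℝ,
      y ∈ Set.Icc ((r ⟨0, hn⟩ - t) / 2) (r ⟨0, hn⟩ / 2) ∧ ∃ g ∈ Γ, g x = y := by
  rw [hΓ, closure_rho_tau_eq_reflTransGroup r tv ⟨0, hn⟩, ← hΛ, hgen]
  intro x
  obtain ⟨g, hg, hgx⟩ := exists_mem_reflTransGroup_apply_mem_Icc ht x
  refine ⟨g x, ⟨hgx, g, hg, rfl⟩, ?_⟩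
  rintro _ ⟨hy, g', hg', rfl⟩
  have h := apply_eq_self_of_mem_reflTransGroup ht (mul_mem hg' (inv_mem hg)) hgx
    (by simpa using hy)
  simpa using h
end

section
/- Let a₀ < a₁ < a₂ and A < A₂ < A₁ < A₀ be reals with t₁ = a₁ − a₀, t₂ = a₂ − a₀, and suppose a_i + A = f − A_i for i = 0,1,2 (so t_i = A₀ − A_i), and A₂ ≥ (A₀ + A)/2. Let x₀ = (A + A₀)/2 and Λ = ⟨t₁, t₂⟩_ℤ. Let π̄ : ℝ → ℝ satisfy π̄(a_i) + π̄(x) = π̄(a_i + x) for all x ∈ [A, A_i] and i = 0,1,2. Then for every x = x₀ + λ₁t₁ + λ₂t₂ ∈ (x₀ + Λ) ∩ [A, A₀] with λ₁, λ₂ ∈ ℤ, one has π̄(x) − π̄(x₀) = λ₁(π̄(a₁) − π̄(a₀)) + λ₂(π̄(a₂) − π̄(a₀)). -/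
/-!
Subtracting the relation for `a₀` at `x + tᵢ` from the one for `aᵢ` at `x` shows that `pibar`
increases by `pibar aᵢ - pibar a₀` under `x ↦ x + tᵢ` whenever both points lie in `[A, A₀]`.
Since `A + tᵢ ≤ x₀ ≤ A₀ - tᵢ`, every point `x₀ + Σ lᵢ tᵢ` of `[A, A₀]` other than `x₀` can be
moved towards `x₀` by one such translation without leaving the interval while decreasing
`Σ |lᵢ|`: to the right of `x₀` some `lᵢ > 0` and we step by `-tᵢ`, to the left some `lᵢ < 0`
and we step by `tᵢ`.
-/

open Set

theorem sub_eq_of_map_add_eq {G : Type*} [AddCommGroup G] {φ : ℝ → G} {a₀ a A B C : ℝ}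
    (ha : a₀ ≤ a) (hC : B - (a - a₀) ≤ C)
    (h₀ : ∀ x ∈ Icc A B, φ a₀ + φ x = φ (a₀ + x))
    (h : ∀ x ∈ Icc A C, φ a + φ x = φ (a + x)) {y : ℝ} (hAy : A ≤ y) (hyB : y + (a - a₀) ≤ B) :
    φ (y + (a - a₀)) - φ y = φ a - φ a₀ := by
  have h₀y := h₀ (y + (a - a₀)) ⟨by linarith, hyB⟩
  rw [show a₀ + (y + (a - a₀)) = a + y by ring, ← h y ⟨hAy, by linarith⟩] at h₀y
  rw [sub_eq_sub_iff_add_eq_add, add_comm, h₀y, add_comm]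

theorem sum_natAbs_sub_single_lt {ι : Type*} [Fintype ι] [DecidableEq ι] {l : ι → ℤ} {i : ι}
    {m : ℤ} (h : (l i - m).natAbs < (l i).natAbs) :
    ∑ j, ((l - Pi.single i m : ι → ℤ) j).natAbs < ∑ j, (l j).natAbs := by
  refine Finset.sum_lt_sum (fun j _ ↦ ?_) ⟨i, Finset.mem_univ _, by simpa using h⟩
  rcases eq_or_ne j i with rfl | hj
  · simpa using h.le
  · simp [hj]

theorem Fintype.linearCombination_neg_of_nonpos {ι : Type*} [Fintype ι] {t : ι → ℝ}
    (ht : ∀ i, 0 < t i) {l : ι → ℤ} (hl : ∀ i, l i ≤ 0) (hl₀ : l ≠ 0) :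
    Fintype.linearCombination ℤ t l < 0 := by
  obtain ⟨j, hj⟩ := Function.ne_iff.mp hl₀
  rw [Fintype.linearCombination_apply, ← Finset.sum_const_zero]
  refine Finset.sum_lt_sum (fun i _ ↦ ?_) ⟨j, Finset.mem_univ _, ?_⟩
  · rw [zsmul_eq_mul]; exact mul_nonpos_of_nonpos_of_nonneg (by exact_mod_cast hl i) (ht i).le
  · rw [zsmul_eq_mul]; exact mul_neg_of_neg_of_pos (by exact_mod_cast (hl j).lt_of_ne hj) (ht j)

theorem Fintype.linearCombination_nonneg {ι : Type*} [Fintype ι] {t : ι → ℝ}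
    (ht : ∀ i, 0 ≤ t i) {l : ι → ℤ} (hl : ∀ i, 0 ≤ l i) :
    0 ≤ Fintype.linearCombination ℤ t l :=
  Finset.sum_nonneg fun i _ ↦ zsmul_nonneg (ht i) (hl i)

theorem Fintype.linearCombination_sub_single {ι M : Type*} [Fintype ι] [DecidableEq ι]
    [AddCommGroup M] (v : ι → M) (l : ι → ℤ) (i : ι) (m : ℤ) :
    Fintype.linearCombination ℤ v (l - Pi.single i m) =
      Fintype.linearCombination ℤ v l - m • v i := by
  simp

theorem sub_eq_linearCombination_of_increment {ι G : Type*} [Fintype ι] [AddCommGroup G]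
    {φ : ℝ → G} {A B x₀ : ℝ} {t : ι → ℝ} {c : ι → G} (ht : ∀ i, 0 < t i)
    (hx₀ : ∀ i, A + t i ≤ x₀ ∧ x₀ + t i ≤ B)
    (hφ : ∀ i y, A ≤ y → y + t i ≤ B → φ (y + t i) - φ y = c i) (l : ι → ℤ)
    (hl : x₀ + Fintype.linearCombination ℤ t l ∈ Icc A B) :
    φ (x₀ + Fintype.linearCombination ℤ t l) - φ x₀ = Fintype.linearCombination ℤ c l := by
  classical
  induction hn : ∑ i, (l i).natAbs using Nat.strong_induction_on generalizing l with
  | _ n ih =>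
  subst hn
  rcases eq_or_ne l 0 with rfl | hl₀
  · simp
  set x := x₀ + Fintype.linearCombination ℤ t l
  obtain ⟨hAx, hxB⟩ := hl
  rcases le_or_gt 0 (Fintype.linearCombination ℤ t l) with hge | hlt
  · obtain ⟨i, hi⟩ : ∃ i, 0 < l i := by
      by_contra! h
      exact (Fintype.linearCombination_neg_of_nonpos ht h hl₀).not_ge hge
    have hrec := fun hl ↦
      ih _ (sum_natAbs_sub_single_lt (i := i) (m := 1) (by omega)) (l - Pi.single i 1) hl rfl
    simp only [Fintype.linearCombination_sub_single, one_smul, ← add_sub_assoc] at hrec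
    have hstep := hφ i (x - t i) (by linarith [hx₀ i]) (by linarith)
    rw [sub_add_cancel] at hstep
    rw [← sub_add_sub_cancel _ (φ (x - t i)), hstep,
      hrec ⟨by linarith [hx₀ i], by linarith [ht i]⟩]
    abel
  · obtain ⟨i, hi⟩ : ∃ i, l i < 0 := by
      by_contra! h
      exact (Fintype.linearCombination_nonneg (fun i ↦ (ht i).le) h).not_gt hlt
    have hrec := fun hl ↦
      ih _ (sum_natAbs_sub_single_lt (i := i) (m := -1) (by omega)) (l - Pi.single i (-1)) hl rfl
    simp only [Fintype.linearCombination_sub_single, neg_smul, one_smul, sub_neg_eq_add,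
      ← add_assoc] at hrec
    have hstep := hφ i x hAx (by linarith [hx₀ i])
    rw [← sub_add_sub_cancel _ (φ (x + t i)), hrec ⟨by linarith [ht i], by linarith [hx₀ i]⟩,
      ← hstep]
    abel

theorem barpi_shift_general (a₀ a₁ a₂ A A₀ A₁ A₂ f t₁ t₂ x₀ : ℝ) (pibar : ℝ → ℝ)
    (ha01 : a₀ < a₁) (ha12 : a₁ < a₂)
    (ht₁ : t₁ = a₁ - a₀) (ht₂ : t₂ = a₂ - a₀)
    (hsym0 : a₀ + A = f - A₀) (hsym1 : a₁ + A = f - A₁) (hsym2 : a₂ + A = f - A₂)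
    (hA2half : (A₀ + A) / 2 ≤ A₂)
    (hx₀ : x₀ = (A + A₀) / 2)
    (hrel0 : ∀ x ∈ Set.Icc A A₀, pibar a₀ + pibar x = pibar (a₀ + x))
    (hrel1 : ∀ x ∈ Set.Icc A A₁, pibar a₁ + pibar x = pibar (a₁ + x))
    (hrel2 : ∀ x ∈ Set.Icc A A₂, pibar a₂ + pibar x = pibar (a₂ + x)) :
    ∀ l₁ l₂ : ℤ, x₀ + (l₁ : ℝ) * t₁ + (l₂ : ℝ) * t₂ ∈ Set.Icc A A₀ →
      pibar (x₀ + (l₁ : ℝ) * t₁ + (l₂ : ℝ) * t₂) - pibar x₀ =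
        (l₁ : ℝ) * (pibar a₁ - pibar a₀) + (l₂ : ℝ) * (pibar a₂ - pibar a₀) := by
  intro l₁ l₂ hx
  subst ht₁ ht₂ hx₀
  have ht : ∀ i, 0 < ![a₁ - a₀, a₂ - a₀] i := Fin.forall_fin_two.2 ⟨by simpa, by simp; linarith⟩
  have hmid : ∀ i, A + ![a₁ - a₀, a₂ - a₀] i ≤ (A + A₀) / 2 ∧
      (A + A₀) / 2 + ![a₁ - a₀, a₂ - a₀] i ≤ A₀ := by
    simp only [Fin.forall_fin_two, Matrix.cons_val_zero, Matrix.cons_val_one]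
    refine ⟨⟨?_, ?_⟩, ?_, ?_⟩ <;> linarith
  have hincr : ∀ i y, A ≤ y → y + ![a₁ - a₀, a₂ - a₀] i ≤ A₀ →
      pibar (y + ![a₁ - a₀, a₂ - a₀] i) - pibar y =
        ![pibar a₁ - pibar a₀, pibar a₂ - pibar a₀] i := by
    simp only [Fin.forall_fin_two, Matrix.cons_val_zero, Matrix.cons_val_one]
    exact ⟨fun y ↦ sub_eq_of_map_add_eq ha01.le (by linarith) hrel0 hrel1,
      fun y ↦ sub_eq_of_map_add_eq (ha01.trans ha12).le (by linarith) hrel0 hrel2⟩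
  have key := sub_eq_linearCombination_of_increment ht hmid hincr ![l₁, l₂]
  simp only [Fintype.linearCombination_apply, Fin.sum_univ_two, Matrix.cons_val_zero,
    Matrix.cons_val_one, zsmul_eq_mul, ← add_assoc] at key
  exact key hx

/-- The translation lemma for the irrational function: if pibar satisfies the
additivity relations pibar(aᵢ) + pibar(x) = pibar(aᵢ + x) for x ∈ [A, Aᵢ], i = 0,1,2,
then on the orbit (x₀ + Λ) ∩ [A, A₀], with Λ = ⟨t₁,t₂⟩_ℤ,
pibar(x) − pibar(x₀) = l₁(pibar(a₁) − pibar(a₀)) + l₂(pibar(a₂) − pibar(a₀)). -/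
theorem barpi_shift (a₀ a₁ a₂ A A₀ A₁ A₂ f t₁ t₂ x₀ : ℝ) (pibar : ℝ → ℝ)
    (ha01 : a₀ < a₁) (ha12 : a₁ < a₂)
    (hAA2 : A < A₂) (hA21 : A₂ < A₁) (hA10 : A₁ < A₀)
    (ht₁ : t₁ = a₁ - a₀) (ht₂ : t₂ = a₂ - a₀)
    (hsym0 : a₀ + A = f - A₀) (hsym1 : a₁ + A = f - A₁) (hsym2 : a₂ + A = f - A₂)
    (hA2half : (A₀ + A) / 2 ≤ A₂)
    (hx₀ : x₀ = (A + A₀) / 2)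
    (hrel0 : ∀ x ∈ Set.Icc A A₀, pibar a₀ + pibar x = pibar (a₀ + x))
    (hrel1 : ∀ x ∈ Set.Icc A A₁, pibar a₁ + pibar x = pibar (a₁ + x))
    (hrel2 : ∀ x ∈ Set.Icc A A₂, pibar a₂ + pibar x = pibar (a₂ + x)) :
    ∀ l₁ l₂ : ℤ, x₀ + (l₁ : ℝ) * t₁ + (l₂ : ℝ) * t₂ ∈ Set.Icc A A₀ →
      pibar (x₀ + (l₁ : ℝ) * t₁ + (l₂ : ℝ) * t₂) - pibar x₀ =
        (l₁ : ℝ) * (pibar a₁ - pibar a₀) + (l₂ : ℝ) * (pibar a₂ - pibar a₀) :=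
  barpi_shift_general a₀ a₁ a₂ A A₀ A₁ A₂ f t₁ t₂ x₀ pibar ha01 ha12 ht₁ ht₂ hsym0 hsym1 hsym2
    hA2half hx₀ hrel0 hrel1 hrel2
end
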